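/- arXiv:2409.07358 — 3 statements merged into one kernel-verified Lean document; each statement's English description precedes it below -/
import Mathlib

section
/- Let β₂, β₃ > 0 and C > 0, and let g : {(θ,w) : 1 < θ < w} → [0,∞) satisfy g(θ,w) ≤ C(θ^{−β₂} + (θ/w)^{β₃}). Then ∫_2^∞ (1/(t (log t)³)) (∫∫_{1 < θ < w < t} (1/(θw)) g(θ,w) dθ dw) dt < ∞. -/
open MeasureTheory Real Set

lemma inner_le (β₂ β₃ C : ℝ) (hβ₂ : 0 < β₂) (hβ₃ : 0 < β₃) (hC : 0 < C)
    (g : ℝ → ℝ → ℝ)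
    (hg0 : ∀ θ w : ℝ, 1 < θ → θ < w → 0 ≤ g θ w)
    (hgb : ∀ θ w : ℝ, 1 < θ → θ < w → g θ w ≤ C * (θ ^ (-β₂) + (θ / w) ^ β₃))
    (θ t : ℝ) (hθ : 1 < θ) (hθt : θ ≤ t) :
    ∫ w in Set.Ioc θ t, (1 / (θ * w)) * g θ w ≤
      C * Real.log t * θ ^ (-1 - β₂) + (C / β₃) * θ⁻¹ := by
  have hθ0 : (0:ℝ) < θ := lt_trans one_pos hθ
  set h : ℝ → ℝ := fun w => C * (θ ^ (-1 - β₂) * w⁻¹ + θ ^ (β₃ - 1) * w ^ (-1 - β₃)) with hh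
  have hcont : ContinuousOn h (Set.Icc θ t) := by
    apply ContinuousOn.mul continuousOn_const
    apply ContinuousOn.add
    · exact ContinuousOn.mul continuousOn_const (ContinuousOn.inv₀ continuousOn_id
        (fun x hx => ne_of_gt (show (0:ℝ) < x by nlinarith [hx.1])))
    · exact ContinuousOn.mul continuousOn_const
        (ContinuousOn.rpow_const continuousOn_id
          (fun x hx => Or.inl (ne_of_gt (show (0:ℝ) < x by nlinarith [hx.1]))))
  have hint : IntegrableOn h (Set.Ioc θ t) :=
    (hcont.integrableOn_Icc).mono_set Set.Ioc_subset_Icc_self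
  have hmono : ∫ w in Set.Ioc θ t, (1 / (θ * w)) * g θ w ≤ ∫ w in Set.Ioc θ t, h w := by
    apply integral_mono_of_nonneg ?_ hint
    · filter_upwards [ae_restrict_mem measurableSet_Ioc] with w hw
      have hw0 : (0:ℝ) < w := lt_trans hθ0 hw.1
      calc (1 / (θ * w)) * g θ w
          ≤ (1 / (θ * w)) * (C * (θ ^ (-β₂) + (θ / w) ^ β₃)) := by
            apply mul_le_mul_of_nonneg_left (hgb θ w hθ hw.1); positivity
        _ = h w := by
            rw [hh]
            have e1 : (θ/w) ^ β₃ = θ ^ β₃ * (w ^ β₃)⁻¹ := by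
              rw [Real.div_rpow hθ0.le hw0.le, div_eq_mul_inv]
            have e2 : θ ^ (-1 - β₂) = θ⁻¹ * θ ^ (-β₂) := by
              rw [show (-1 - β₂) = (-1) + (-β₂) by ring, Real.rpow_add hθ0, Real.rpow_neg_one]
            have e3 : θ ^ (β₃ - 1) = θ ^ β₃ * θ⁻¹ := by
              rw [show (β₃ - 1) = β₃ + (-1) by ring, Real.rpow_add hθ0, Real.rpow_neg_one]
            have e4 : w ^ (-1 - β₃) = w⁻¹ * (w ^ β₃)⁻¹ := by
              rw [show (-1 - β₃) = (-1) + (-β₃) by ring, Real.rpow_add hw0,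
                Real.rpow_neg_one, Real.rpow_neg hw0.le]
            simp only [e1, e2, e3, e4]
            field_simp
    · filter_upwards [ae_restrict_mem measurableSet_Ioc] with w hw
      have hw0 : (0:ℝ) < w := lt_trans hθ0 hw.1
      have := hg0 θ w hθ hw.1
      positivity
  refine hmono.trans ?_
  have h0 : (0:ℝ) ∉ Set.uIcc θ t := by
    rw [Set.uIcc_of_le hθt]
    intro hmem; have := hmem.1; linarith
  have i1 : IntervalIntegrable (fun w : ℝ => w⁻¹) volume θ t := by
    apply ContinuousOn.intervalIntegrable
    apply ContinuousOn.inv₀ continuousOn_id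
    intro x hx; rw [Set.uIcc_of_le hθt] at hx; exact ne_of_gt (show (0:ℝ) < x by nlinarith [hx.1])
  have i2 : IntervalIntegrable (fun w : ℝ => w ^ (-1 - β₃)) volume θ t := by
    apply ContinuousOn.intervalIntegrable
    apply ContinuousOn.rpow_const continuousOn_id
    intro x hx; rw [Set.uIcc_of_le hθt] at hx; exact Or.inl <| ne_of_gt (show (0:ℝ) < x by nlinarith [hx.1])
  have I1 : ∫ w in θ..t, w⁻¹ = Real.log (t / θ) := integral_inv h0
  have I2 : ∫ w in θ..t, w ^ (-1 - β₃) = (t ^ (-β₃) - θ ^ (-β₃)) / (-β₃) := by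
    rw [integral_rpow (Or.inr ⟨by intro hc; nlinarith, h0⟩)]
    rw [show (-1 - β₃) + 1 = -β₃ by ring]
  have hival : ∫ w in Set.Ioc θ t, h w =
      C * (θ ^ (-1 - β₂) * Real.log (t / θ) +
        θ ^ (β₃ - 1) * ((t ^ (-β₃) - θ ^ (-β₃)) / (-β₃))) := by
    rw [← intervalIntegral.integral_of_le hθt, hh]
    simp only
    rw [intervalIntegral.integral_const_mul,
      intervalIntegral.integral_add (i1.const_mul _) (i2.const_mul _),
      intervalIntegral.integral_const_mul, intervalIntegral.integral_const_mul, I1, I2]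
  rw [hival]
  have ht0 : (0:ℝ) < t := by linarith
  have hp1 : (0:ℝ) < θ ^ (-1-β₂) := Real.rpow_pos_of_pos hθ0 _
  have hlog : θ ^ (-1-β₂) * Real.log (t / θ) ≤ θ ^ (-1-β₂) * Real.log t := by
    apply mul_le_mul_of_nonneg_left _ hp1.le
    rw [Real.log_div (ne_of_gt ht0) (ne_of_gt hθ0)]
    have : 0 ≤ Real.log θ := Real.log_nonneg hθ.le
    linarith
  have htb : (0:ℝ) ≤ t ^ (-β₃) := (Real.rpow_pos_of_pos ht0 _).le
  have hθb : (0:ℝ) < θ ^ (β₃ - 1) := Real.rpow_pos_of_pos hθ0 _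
  have e5 : θ ^ (β₃ - 1) * θ ^ (-β₃) = θ⁻¹ := by
    rw [← Real.rpow_add hθ0, show (β₃ - 1 + -β₃) = -1 by ring, Real.rpow_neg_one]
  have key2 : θ ^ (β₃ - 1) * ((t ^ (-β₃) - θ ^ (-β₃)) / (-β₃)) ≤ (1/β₃) * θ⁻¹ := by
    have hbinv : (0:ℝ) < β₃⁻¹ := inv_pos.2 hβ₃
    calc θ ^ (β₃ - 1) * ((t ^ (-β₃) - θ ^ (-β₃)) / (-β₃))
        = θ ^ (β₃ - 1) * (θ ^ (-β₃) - t ^ (-β₃)) * β₃⁻¹ := by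
          rw [div_neg, ← neg_div, neg_sub, div_eq_mul_inv]; ring
      _ ≤ θ ^ (β₃ - 1) * θ ^ (-β₃) * β₃⁻¹ := by
          nlinarith [mul_nonneg hθb.le htb]
      _ = (1/β₃) * θ⁻¹ := by rw [e5, one_div]; ring
  calc C * (θ ^ (-1-β₂) * Real.log (t / θ) +
        θ ^ (β₃ - 1) * ((t ^ (-β₃) - θ ^ (-β₃)) / (-β₃)))
      ≤ C * (θ ^ (-1-β₂) * Real.log t + (1/β₃) * θ⁻¹) := by
        apply mul_le_mul_of_nonneg_left _ hC.le
        linarith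
    _ = C * Real.log t * θ ^ (-1 - β₂) + (C / β₃) * θ⁻¹ := by ring

lemma outer_le (β₂ β₃ C : ℝ) (hβ₂ : 0 < β₂) (hβ₃ : 0 < β₃) (hC : 0 < C)
    (g : ℝ → ℝ → ℝ)
    (hg0 : ∀ θ w : ℝ, 1 < θ → θ < w → 0 ≤ g θ w)
    (hgb : ∀ θ w : ℝ, 1 < θ → θ < w → g θ w ≤ C * (θ ^ (-β₂) + (θ / w) ^ β₃))
    (t : ℝ) (ht : 2 < t) :
    (∫ θ in Set.Ioc (1:ℝ) t, ∫ w in Set.Ioc θ t, (1 / (θ * w)) * g θ w) ≤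
      (C / β₂ + C / β₃) * Real.log t := by
  have ht1 : (1:ℝ) ≤ t := by linarith
  have hlt : 0 < Real.log t := Real.log_pos (by linarith)
  set G : ℝ → ℝ := fun θ => C * Real.log t * θ ^ (-1 - β₂) + (C / β₃) * θ⁻¹ with hG
  have hcont : ContinuousOn G (Set.Icc 1 t) := by
    apply ContinuousOn.add
    · exact ContinuousOn.mul continuousOn_const
        (ContinuousOn.rpow_const continuousOn_id
          (fun x hx => Or.inl (ne_of_gt (show (0:ℝ) < x by nlinarith [hx.1]))))
    · exact ContinuousOn.mul continuousOn_const (ContinuousOn.inv₀ continuousOn_id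
        (fun x hx => ne_of_gt (show (0:ℝ) < x by nlinarith [hx.1])))
  have hint : IntegrableOn G (Set.Ioc 1 t) :=
    (hcont.integrableOn_Icc).mono_set Set.Ioc_subset_Icc_self
  have hmono : (∫ θ in Set.Ioc (1:ℝ) t, ∫ w in Set.Ioc θ t, (1 / (θ * w)) * g θ w) ≤
      ∫ θ in Set.Ioc (1:ℝ) t, G θ := by
    apply integral_mono_of_nonneg ?_ hint
    · filter_upwards [ae_restrict_mem measurableSet_Ioc] with θ hθ
      exact inner_le β₂ β₃ C hβ₂ hβ₃ hC g hg0 hgb θ t hθ.1 hθ.2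
    · filter_upwards [ae_restrict_mem measurableSet_Ioc] with θ hθ
      apply setIntegral_nonneg measurableSet_Ioc
      intro w hw
      have hθ0 : (0:ℝ) < θ := lt_trans one_pos hθ.1
      have hw0 : (0:ℝ) < w := lt_trans hθ0 hw.1
      have := hg0 θ w hθ.1 hw.1
      positivity
  refine hmono.trans ?_
  have h0 : (0:ℝ) ∉ Set.uIcc 1 t := by
    rw [Set.uIcc_of_le ht1]
    intro hmem; have := hmem.1; linarith
  have i1 : IntervalIntegrable (fun θ : ℝ => θ⁻¹) volume 1 t := by
    apply ContinuousOn.intervalIntegrable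
    apply ContinuousOn.inv₀ continuousOn_id
    intro x hx; rw [Set.uIcc_of_le ht1] at hx; exact ne_of_gt (show (0:ℝ) < x by nlinarith [hx.1])
  have i2 : IntervalIntegrable (fun θ : ℝ => θ ^ (-1 - β₂)) volume 1 t := by
    apply ContinuousOn.intervalIntegrable
    apply ContinuousOn.rpow_const continuousOn_id
    intro x hx; rw [Set.uIcc_of_le ht1] at hx; exact Or.inl <| ne_of_gt (show (0:ℝ) < x by nlinarith [hx.1])
  have I1 : ∫ θ in (1:ℝ)..t, θ⁻¹ = Real.log t := by
    rw [integral_inv h0, div_one]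
  have I2 : ∫ θ in (1:ℝ)..t, θ ^ (-1 - β₂) = (t ^ (-β₂) - 1) / (-β₂) := by
    rw [integral_rpow (Or.inr ⟨by intro hc; nlinarith, h0⟩)]
    rw [show (-1 - β₂) + 1 = -β₂ by ring, Real.one_rpow]
  have hval : ∫ θ in Set.Ioc (1:ℝ) t, G θ =
      C * Real.log t * ((t ^ (-β₂) - 1) / (-β₂)) + (C / β₃) * Real.log t := by
    rw [← intervalIntegral.integral_of_le ht1, hG]
    simp only
    rw [intervalIntegral.integral_add (i2.const_mul _) (i1.const_mul _),
      intervalIntegral.integral_const_mul, intervalIntegral.integral_const_mul, I1, I2]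
  rw [hval]
  have ht0 : (0:ℝ) < t := by linarith
  have htb : (0:ℝ) ≤ t ^ (-β₂) := (Real.rpow_pos_of_pos ht0 _).le
  have key : (t ^ (-β₂) - 1) / (-β₂) ≤ 1 / β₂ := by
    rw [div_neg, ← neg_div, neg_sub]
    gcongr
    linarith
  calc C * Real.log t * ((t ^ (-β₂) - 1) / (-β₂)) + (C / β₃) * Real.log t
      ≤ C * Real.log t * (1 / β₂) + (C / β₃) * Real.log t := by
        have h := mul_le_mul_of_nonneg_left key (show (0:ℝ) ≤ C * Real.log t by positivity)
        linarith
    _ = (C / β₂ + C / β₃) * Real.log t := by ring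

/-- If `g(θ,w) ≤ C(θ^{−β₂} + (θ/w)^{β₃})` on `{1 < θ < w}` with `g ≥ 0`, then
`∫_2^∞ (1/(t (log t)³)) ∫∫_{1<θ<w<t} (1/(θw)) g(θ,w) dθ dw dt < ∞`. -/
theorem stmt_10 (β₂ β₃ C : ℝ) (hβ₂ : 0 < β₂) (hβ₃ : 0 < β₃) (hC : 0 < C)
    (g : ℝ → ℝ → ℝ) (hmeas : Measurable (Function.uncurry g))
    (hg0 : ∀ θ w : ℝ, 1 < θ → θ < w → 0 ≤ g θ w)
    (hgb : ∀ θ w : ℝ, 1 < θ → θ < w → g θ w ≤ C * (θ ^ (-β₂) + (θ / w) ^ β₃)) :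
    (∫⁻ t in Set.Ioi (2 : ℝ),
      ENNReal.ofReal ((1 / (t * (Real.log t) ^ 3)) *
        ∫ θ in Set.Ioc (1 : ℝ) t, ∫ w in Set.Ioc θ t, (1 / (θ * w)) * g θ w)) < ⊤ := by
  set K := C / β₂ + C / β₃ with hK
  have hK0 : 0 < K := by positivity
  have step : (∫⁻ t in Set.Ioi (2 : ℝ),
      ENNReal.ofReal ((1 / (t * (Real.log t) ^ 3)) *
        ∫ θ in Set.Ioc (1 : ℝ) t, ∫ w in Set.Ioc θ t, (1 / (θ * w)) * g θ w)) ≤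
      ∫⁻ t in Set.Ioi (2 : ℝ), ENNReal.ofReal (K * (t * (Real.log t) ^ 2)⁻¹) := by
    apply lintegral_mono_ae
    filter_upwards [ae_restrict_mem measurableSet_Ioi] with t ht
    apply ENNReal.ofReal_le_ofReal
    have ht2 : (2:ℝ) < t := ht
    have ht0 : (0:ℝ) < t := by linarith
    have hlt : 0 < Real.log t := Real.log_pos (by linarith)
    have hI := outer_le β₂ β₃ C hβ₂ hβ₃ hC g hg0 hgb t ht2
    calc (1 / (t * Real.log t ^ 3)) *
          ∫ θ in Set.Ioc (1 : ℝ) t, ∫ w in Set.Ioc θ t, (1 / (θ * w)) * g θ w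
        ≤ (1 / (t * Real.log t ^ 3)) * (K * Real.log t) := by
          apply mul_le_mul_of_nonneg_left hI (by positivity)
      _ = K * (t * Real.log t ^ 2)⁻¹ := by
          field_simp
  refine lt_of_le_of_lt step ?_
  have hderiv : ∀ x ∈ Set.Ici (2:ℝ), HasDerivAt (fun t => -(Real.log t)⁻¹)
      ((x * Real.log x ^ 2)⁻¹) x := by
    intro x hx
    have hx2 : (2:ℝ) ≤ x := hx
    have hx0 : (0:ℝ) < x := by linarith
    have hlx : Real.log x ≠ 0 := ne_of_gt (Real.log_pos (by linarith))
    have h1 := (Real.hasDerivAt_log (ne_of_gt hx0)).inv hlx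
    have h2 := h1.neg
    rw [show (x * Real.log x ^ 2)⁻¹ = -(-x⁻¹ / Real.log x ^ 2) by ring]
    exact h2
  have hfin : IntegrableOn (fun t : ℝ => K * (t * Real.log t ^ 2)⁻¹) (Set.Ioi 2) volume := by
    apply Integrable.const_mul
    apply integrableOn_Ioi_deriv_of_nonneg' hderiv
    · intro x hx
      have hx2 : (2:ℝ) < x := hx
      have hx0 : (0:ℝ) < x := by linarith
      have hlx : 0 < Real.log x := Real.log_pos (by linarith)
      positivity
    · have : Filter.Tendsto (fun t : ℝ => (Real.log t)⁻¹) Filter.atTop (nhds 0) :=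
        Real.tendsto_log_atTop.inv_tendsto_atTop
      simpa using this.neg
  exact hfin.setLIntegral_lt_top
end

section
/- Fix t₀ > 0, d ≥ 1, and α ∈ (0, min(2,d)). For 0 < r, r' and x, x' ∈ ℝ^d with |x| < 1, |x'| < 1, and any ρ ≥ 1 and R ≥ 1, the integral ∫_0^{(r+r')/(2R²)} θ^{(d−α−2)/2} (θ + (r+r')/(2R²))^{−d/2} exp(−|x − ρx'|²/(4(θ + (r+r')/(2R²)))) dθ is bounded above by a constant (depending only on d, α, t₀) times |x − ρx'|^{−α}, provided r, r' ∈ (0, t₀). -/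
open MeasureTheory

/-- Elementary bound `u^{α/2} e^{-u} ≤ 1` for `u > 0`, `0 < α < 2`. -/
lemma stmt11_aux (α : ℝ) (hα0 : 0 < α) (hα2 : α < 2) (u : ℝ) (hu : 0 < u) :
    u ^ (α / 2) * Real.exp (-u) ≤ 1 := by
  have h1 : u ^ (α / 2) ≤ u + 1 := by
    rcases le_total u 1 with h | h
    · have := Real.rpow_le_one hu.le h (by positivity : (0:ℝ) ≤ α / 2)
      linarith
    · have : u ^ (α / 2) ≤ u ^ (1:ℝ) :=
        Real.rpow_le_rpow_of_exponent_le h (by linarith)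
      rw [Real.rpow_one] at this
      linarith
  have h2 : u + 1 ≤ Real.exp u := by
    have := Real.add_one_le_exp u; linarith
  calc u ^ (α / 2) * Real.exp (-u) ≤ Real.exp u * Real.exp (-u) :=
        mul_le_mul_of_nonneg_right (le_trans h1 h2) (Real.exp_nonneg _)
    _ = 1 := by rw [← Real.exp_add]; simp

/-- Key bound: `τ^{-α/2} e^{-s²/(8τ)} ≤ 8^{α/2} s^{-α}`. -/
lemma stmt11_key (α : ℝ) (hα0 : 0 < α) (hα2 : α < 2) (τ s : ℝ) (hτ : 0 < τ) (hs : 0 < s) :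
    τ ^ (-α / 2) * Real.exp (-s ^ 2 / (8 * τ)) ≤ 8 ^ (α / 2) * s ^ (-α) := by
  rw [show -s ^ 2 / (8 * τ) = -(s ^ 2 / (8 * τ)) from neg_div _ _]
  set u : ℝ := s ^ 2 / (8 * τ) with hu_def
  have hu : 0 < u := by positivity
  have key : τ ^ (-α / 2) = 8 ^ (α / 2) * s ^ (-α) * u ^ (α / 2) := by
    rw [hu_def, Real.div_rpow (by positivity) (by positivity),
        Real.mul_rpow (by norm_num) hτ.le]
    have hs2 : ((s : ℝ) ^ 2) ^ (α / 2) = s ^ α := by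
      rw [← Real.rpow_natCast s 2, ← Real.rpow_mul hs.le]
      push_cast
      have h2 : (2:ℝ) * (α / 2) = α := by ring
      rw [h2]
    rw [hs2, Real.rpow_neg hs.le α]
    have hneg : τ ^ (-α / 2) = (τ ^ (α / 2))⁻¹ := by
      rw [← Real.rpow_neg hτ.le]; ring_nf
    rw [hneg]
    have h8 : ((8:ℝ) ^ (α / 2)) ≠ 0 := by positivity
    have hsα : ((s:ℝ) ^ α) ≠ 0 := by positivity
    have hτα : ((τ:ℝ) ^ (α / 2)) ≠ 0 := by positivity
    field_simp
  rw [key, mul_assoc]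
  have hone := stmt11_aux α hα0 hα2 u hu
  calc 8 ^ (α / 2) * s ^ (-α) * (u ^ (α / 2) * Real.exp (-u))
      ≤ 8 ^ (α / 2) * s ^ (-α) * 1 := mul_le_mul_of_nonneg_left hone (by positivity)
    _ = 8 ^ (α / 2) * s ^ (-α) := by ring

/-- The small-`θ` part of the heat-kernel estimate: for `r, r' ∈ (0, t₀)`,
`|x|, |x'| < 1`, `ρ ≥ 1`, `R ≥ 1`,
`∫_0^{(r+r')/(2R²)} θ^{(d−α−2)/2} (θ+(r+r')/(2R²))^{−d/2}
  exp(−|x−ρx'|²/(4(θ+(r+r')/(2R²)))) dθ ≤ C |x−ρx'|^{−α}`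
with `C` depending only on `d, α, t₀`. -/
theorem stmt_11 (d : ℕ) (hd : 1 ≤ d) (α : ℝ) (hα0 : 0 < α) (hα : α < min 2 (d : ℝ))
    (t₀ : ℝ) (ht₀ : 0 < t₀) :
    ∃ C : ℝ, 0 < C ∧ ∀ (r r' : ℝ), 0 < r → r < t₀ → 0 < r' → r' < t₀ →
      ∀ (x x' : EuclideanSpace ℝ (Fin d)), ‖x‖ < 1 → ‖x'‖ < 1 →
      ∀ (ρ R : ℝ), 1 ≤ ρ → 1 ≤ R → x ≠ ρ • x' →
        (∫ θ in Set.Ioc (0 : ℝ) ((r + r') / (2 * R ^ 2)),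
            θ ^ ((d - α - 2) / 2) * (θ + (r + r') / (2 * R ^ 2)) ^ (-(d : ℝ) / 2) *
              Real.exp (-‖x - ρ • x'‖ ^ 2 / (4 * (θ + (r + r') / (2 * R ^ 2)))))
          ≤ C * ‖x - ρ • x'‖ ^ (-α) := by
  have hα2 : α < 2 := lt_of_lt_of_le hα (min_le_left _ _)
  have hαd : α < d := lt_of_lt_of_le hα (min_le_right _ _)
  have hdα : 0 < (d : ℝ) - α := by linarith
  refine ⟨2 / ((d : ℝ) - α) * 8 ^ (α / 2), by positivity, ?_⟩
  intro r r' hr hrt hr' hr't x x' hx hx' ρ R hρ hR hne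
  set τ : ℝ := (r + r') / (2 * R ^ 2) with hτdef
  have hR0 : (0:ℝ) < R := lt_of_lt_of_le one_pos hR
  have hτ : 0 < τ := by positivity
  set s : ℝ := ‖x - ρ • x'‖ with hsdef
  have hs : 0 < s := norm_pos_iff.mpr (sub_ne_zero.mpr hne)
  set p : ℝ := ((d : ℝ) - α - 2) / 2 with hpdef
  have hp : -1 < p := by rw [hpdef]; linarith
  set K : ℝ := τ ^ (-(d : ℝ) / 2) * Real.exp (-s ^ 2 / (8 * τ)) with hKdef
  have hK : 0 ≤ K := by positivity
  -- pointwise bound on the integrand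
  have hbound : ∀ θ ∈ Set.Ioc (0:ℝ) τ,
      θ ^ p * (θ + τ) ^ (-(d : ℝ) / 2) * Real.exp (-s ^ 2 / (4 * (θ + τ))) ≤ θ ^ p * K := by
    intro θ hθ
    obtain ⟨hθ0, hθτ⟩ := hθ
    have hθτ0 : 0 < θ + τ := by linarith
    have hA : (θ + τ) ^ (-(d : ℝ) / 2) ≤ τ ^ (-(d : ℝ) / 2) := by
      apply Real.rpow_le_rpow_of_nonpos hτ (by linarith)
      have : (0:ℝ) ≤ (d : ℝ) / 2 := by positivity
      linarith
    have hB : Real.exp (-s ^ 2 / (4 * (θ + τ))) ≤ Real.exp (-s ^ 2 / (8 * τ)) := by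
      apply Real.exp_le_exp.mpr
      rw [neg_div, neg_div, neg_le_neg_iff]
      apply div_le_div_of_nonneg_left (by positivity) (by linarith) (by linarith)
    calc θ ^ p * (θ + τ) ^ (-(d : ℝ) / 2) * Real.exp (-s ^ 2 / (4 * (θ + τ)))
        = θ ^ p * ((θ + τ) ^ (-(d : ℝ) / 2) * Real.exp (-s ^ 2 / (4 * (θ + τ)))) := by ring
      _ ≤ θ ^ p * (τ ^ (-(d : ℝ) / 2) * Real.exp (-s ^ 2 / (8 * τ))) := by
          apply mul_le_mul_of_nonneg_left _ (Real.rpow_nonneg hθ0.le p)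
          exact mul_le_mul hA hB (Real.exp_nonneg _) (Real.rpow_nonneg hτ.le _)
      _ = θ ^ p * K := by rw [hKdef]
  -- integrability of the dominating function
  have hgint : IntegrableOn (fun θ : ℝ => θ ^ p * K) (Set.Ioc (0:ℝ) τ) := by
    have h1 : IntervalIntegrable (fun θ : ℝ => θ ^ p) volume 0 τ :=
      intervalIntegral.intervalIntegrable_rpow' hp
    have h2 : IntervalIntegrable (fun θ : ℝ => θ ^ p * K) volume 0 τ := h1.mul_const K
    exact (intervalIntegrable_iff_integrableOn_Ioc_of_le hτ.le).mp h2
  -- compare integrals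
  have hle : (∫ θ in Set.Ioc (0:ℝ) τ,
      θ ^ p * (θ + τ) ^ (-(d : ℝ) / 2) * Real.exp (-s ^ 2 / (4 * (θ + τ))))
      ≤ ∫ θ in Set.Ioc (0:ℝ) τ, θ ^ p * K := by
    apply integral_mono_of_nonneg
    · filter_upwards [ae_restrict_mem measurableSet_Ioc] with θ hθ
      have hθ0 : 0 < θ := hθ.1
      positivity
    · exact hgint
    · filter_upwards [ae_restrict_mem measurableSet_Ioc] with θ hθ
      exact hbound θ hθ
  -- compute the dominating integral
  have hval : (∫ θ in Set.Ioc (0:ℝ) τ, θ ^ p * K) = τ ^ (p + 1) / (p + 1) * K := by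
    rw [← intervalIntegral.integral_of_le hτ.le, intervalIntegral.integral_mul_const,
        integral_rpow (Or.inl hp)]
    rw [Real.zero_rpow (by linarith : p + 1 ≠ 0)]
    ring
  have hp1 : p + 1 = ((d : ℝ) - α) / 2 := by rw [hpdef]; ring
  -- combine
  have hτpow : τ ^ (p + 1) * τ ^ (-(d : ℝ) / 2) = τ ^ (-α / 2) := by
    rw [← Real.rpow_add hτ, hp1]
    ring_nf
  have hkey := stmt11_key α hα0 hα2 τ s hτ hs
  calc (∫ θ in Set.Ioc (0:ℝ) τ,
        θ ^ p * (θ + τ) ^ (-(d : ℝ) / 2) * Real.exp (-s ^ 2 / (4 * (θ + τ))))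
      ≤ τ ^ (p + 1) / (p + 1) * K := hle.trans (le_of_eq hval)
    _ = 2 / ((d : ℝ) - α) * (τ ^ (-α / 2) * Real.exp (-s ^ 2 / (8 * τ))) := by
        rw [hKdef, hp1, ← hτpow]
        field_simp
        congr 1; linarith [hp1]
    _ ≤ 2 / ((d : ℝ) - α) * (8 ^ (α / 2) * s ^ (-α)) :=
        mul_le_mul_of_nonneg_left hkey (by positivity)
    _ = 2 / ((d : ℝ) - α) * 8 ^ (α / 2) * s ^ (-α) := by ring
end

section
/- Let γ₀ : ℝ → [0,∞] be locally integrable, t₀ > 0, and let Φ : ℝ^d → [0,∞) be integrable. Suppose u is a random field with Cov(u(t₀,x), u(t₀,y)) = Φ(x − y) ≥ 0 for all x, y, and define σ_R² = ∫_{|x|<R} ∫_{|y|<R} Φ(x−y) dx dy with σ_R ≍ R^{d/2} as R → ∞. Then for all R' ≥ R > 1, |Cov(F_R/σ_R, F_{R'}/σ_{R'})| ≤ C (R/R')^{d/2}, where F_R = ∫_{|x|<R} (u(t₀,x) − E u(t₀,x)) dx and C depends only on ‖Φ‖_{L¹} and the implicit constants in σ_R ≍ R^{d/2}. -/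
open MeasureTheory

lemma aux_abs_mul_le_half (a b : ℝ) : |a * b| ≤ (a ^ 2 + b ^ 2) / 2 := by
  rcases abs_cases (a * b) with ⟨h, _⟩ | ⟨h, _⟩ <;> rw [h] <;>
    nlinarith [sq_nonneg (a - b), sq_nonneg (a + b)]

lemma aux_abs_le_half (a : ℝ) : |a| ≤ (1 + a ^ 2) / 2 := by
  rcases abs_cases a with ⟨h, _⟩ | ⟨h, _⟩ <;> rw [h] <;>
    nlinarith [sq_nonneg (1 - a), sq_nonneg (1 + a)]

/-- If `Cov(u(t₀,x),u(t₀,y)) = Φ(x−y) ≥ 0` with `Φ ∈ L¹`, and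
`σ_R² = ∫∫_{B_R²} Φ(x−y)` with `σ_R ≍ R^{d/2}`, then
`|Cov(F_R/σ_R, F_{R'}/σ_{R'})| ≤ C (R/R')^{d/2}` for all `R' ≥ R > 1`, where
`F_R = ∫_{B_R} (u(t₀,x) − E u(t₀,x)) dx`. -/
theorem stmt_14 {Ω : Type*} [MeasurableSpace Ω] (μ : Measure Ω) [IsProbabilityMeasure μ]
    (d : ℕ) (hd : 1 ≤ d) (t₀ : ℝ) (ht₀ : 0 < t₀)
    (γ₀ : ℝ → ℝ) (hγ₀loc : LocallyIntegrable γ₀) (hγ₀pos : ∀ r, 0 ≤ γ₀ r)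
    (Φ : EuclideanSpace ℝ (Fin d) → ℝ) (hΦint : Integrable Φ) (hΦpos : ∀ z, 0 ≤ Φ z)
    (u : EuclideanSpace ℝ (Fin d) → Ω → ℝ)
    (humeas : Measurable (Function.uncurry u))
    (huL2 : ∀ x, MemLp (u x) 2 μ)
    (hcov : ∀ x y, (∫ ω, u x ω * u y ω ∂μ) - (∫ ω, u x ω ∂μ) * (∫ ω, u y ω ∂μ)
      = Φ (x - y))
    (σ : ℝ → ℝ) (hσpos : ∀ R, 1 < R → 0 < σ R)
    (hσ : ∀ R, 1 < R → (σ R) ^ 2 =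
      ∫ x in Metric.ball (0 : EuclideanSpace ℝ (Fin d)) R,
        ∫ y in Metric.ball (0 : EuclideanSpace ℝ (Fin d)) R, Φ (x - y))
    (c₁ c₂ : ℝ) (hc₁ : 0 < c₁) (hc₂ : 0 < c₂)
    (hσlow : ∀ R, 1 < R → c₁ * R ^ ((d : ℝ) / 2) ≤ σ R)
    (hσup : ∀ R, 1 < R → σ R ≤ c₂ * R ^ ((d : ℝ) / 2))
    (F : ℝ → Ω → ℝ)
    (hF : ∀ R ω, F R ω =
      ∫ x in Metric.ball (0 : EuclideanSpace ℝ (Fin d)) R,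
        (u x ω - ∫ ω', u x ω' ∂μ)) :
    ∃ C : ℝ, 0 < C ∧ ∀ R R' : ℝ, 1 < R → R ≤ R' →
      |(∫ ω, (F R ω / σ R) * (F R' ω / σ R') ∂μ)
          - (∫ ω, F R ω / σ R ∂μ) * (∫ ω, F R' ω / σ R' ∂μ)|
        ≤ C * (R / R') ^ ((d : ℝ) / 2) := by
  classical
  haveI : Nonempty (Fin d) := ⟨⟨0, hd⟩⟩
  set ν : Measure (EuclideanSpace ℝ (Fin d)) := volume with hν
  set B : ℝ → Set (EuclideanSpace ℝ (Fin d)) := fun R => Metric.ball (0 : EuclideanSpace ℝ (Fin d)) R with hB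
  set m : EuclideanSpace ℝ (Fin d) → ℝ := fun x => ∫ ω, u x ω ∂μ with hm
  set v : EuclideanSpace ℝ (Fin d) → Ω → ℝ := fun x ω => u x ω - m x with hv
  have husm : StronglyMeasurable (Function.uncurry u) := humeas.stronglyMeasurable
  have hmsm : StronglyMeasurable m := husm.integral_prod_right'
  have hvsm : StronglyMeasurable (fun q : EuclideanSpace ℝ (Fin d) × Ω => v q.1 q.2) :=
    husm.sub (hmsm.comp_measurable measurable_fst)
  have huint : ∀ x, Integrable (u x) μ := fun x => (huL2 x).integrable one_le_two
  have hvL2 : ∀ x, MemLp (v x) 2 μ := fun x => (huL2 x).sub (memLp_const (m x))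
  have hvint : ∀ x, Integrable (v x) μ := fun x => (huint x).sub (integrable_const _)
  have hvsq : ∀ x, Integrable (fun ω => v x ω ^ 2) μ := fun x => (hvL2 x).integrable_sq
  have hvmean : ∀ x, ∫ ω, v x ω ∂μ = 0 := by
    intro x
    rw [hv]
    simp only
    rw [integral_sub (huint x) (integrable_const _), integral_const, probReal_univ]
    simp [hm]
  have husq : ∀ x y, Integrable (fun ω => u x ω * u y ω) μ := by
    intro x y
    refine (((huL2 x).integrable_sq.add (huL2 y).integrable_sq).div_const 2).mono'
      ((huL2 x).aestronglyMeasurable.mul (huL2 y).aestronglyMeasurable) ?_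
    filter_upwards with ω
    simp only [Pi.add_apply, Pi.mul_apply]
    rw [Real.norm_eq_abs]
    exact aux_abs_mul_le_half _ _
  have hvmul_int : ∀ x y, Integrable (fun ω => v x ω * v y ω) μ := by
    intro x y
    refine (((hvsq x).add (hvsq y)).div_const 2).mono'
      ((hvL2 x).aestronglyMeasurable.mul (hvL2 y).aestronglyMeasurable) ?_
    filter_upwards with ω
    simp only [Pi.add_apply, Pi.mul_apply]
    rw [Real.norm_eq_abs]
    exact aux_abs_mul_le_half _ _
  -- covariance of centered field
  have hcov_v : ∀ x y, ∫ ω, v x ω * v y ω ∂μ = Φ (x - y) := by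
    intro x y
    have hexp : ∀ ω, v x ω * v y ω = u x ω * u y ω - m x * u y ω - m y * u x ω + m x * m y := by
      intro ω; simp only [hv]; ring
    have hIy : Integrable (fun ω => m x * u y ω) μ := (huint y).const_mul (m x)
    have hIx : Integrable (fun ω => m y * u x ω) μ := (huint x).const_mul (m y)
    have hI1 : Integrable (fun ω => u x ω * u y ω - m x * u y ω) μ := (husq x y).sub hIy
    have hI2 : Integrable (fun ω => u x ω * u y ω - m x * u y ω - m y * u x ω) μ := hI1.sub hIx
    rw [show (fun ω => v x ω * v y ω) = fun ω => u x ω * u y ω - m x * u y ω - m y * u x ω + m x * m y from funext hexp]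
    rw [integral_add hI2 (integrable_const _), integral_sub hI1 hIx, integral_sub (husq x y) hIy,
      integral_const_mul, integral_const_mul, integral_const, probReal_univ]
    simp only [hm, ENNReal.toReal_one, one_smul, smul_eq_mul, one_mul]
    linear_combination hcov x y
  have hvvar : ∀ x, ∫ ω, v x ω ^ 2 ∂μ = Φ 0 := by
    intro x
    have : (fun ω => v x ω ^ 2) = fun ω => v x ω * v x ω := by funext ω; ring
    rw [this, hcov_v x x, sub_self]
  -- L¹ bounds
  have hΦ0 : 0 ≤ Φ 0 := hΦpos 0
  have hvv_bound : ∀ x y, ∫ ω, ‖v x ω * v y ω‖ ∂μ ≤ Φ 0 := by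
    intro x y
    have h1 : ∫ ω, ‖v x ω * v y ω‖ ∂μ ≤ ∫ ω, (v x ω ^ 2 + v y ω ^ 2) / 2 ∂μ := by
      refine integral_mono (hvmul_int x y).norm (((hvsq x).add (hvsq y)).div_const 2) ?_
      intro ω
      dsimp only
      rw [Real.norm_eq_abs]
      exact aux_abs_mul_le_half _ _
    calc ∫ ω, ‖v x ω * v y ω‖ ∂μ ≤ ∫ ω, (v x ω ^ 2 + v y ω ^ 2) / 2 ∂μ := h1
    _ = ((∫ ω, v x ω ^ 2 ∂μ) + ∫ ω, v y ω ^ 2 ∂μ) / 2 := by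
        rw [integral_div, integral_add (hvsq x) (hvsq y)]
    _ = Φ 0 := by rw [hvvar, hvvar]; ring
  have hv1_bound : ∀ x, ∫ ω, ‖v x ω‖ ∂μ ≤ (1 + Φ 0) / 2 := by
    intro x
    have h1 : ∫ ω, ‖v x ω‖ ∂μ ≤ ∫ ω, (1 + v x ω ^ 2) / 2 ∂μ := by
      refine integral_mono (hvint x).norm (((integrable_const 1).add (hvsq x)).div_const 2) ?_
      intro ω
      dsimp only
      rw [Real.norm_eq_abs]
      exact aux_abs_le_half _
    calc ∫ ω, ‖v x ω‖ ∂μ ≤ ∫ ω, (1 + v x ω ^ 2) / 2 ∂μ := h1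
    _ = (1 + ∫ ω, v x ω ^ 2 ∂μ) / 2 := by
        rw [integral_div, integral_add (integrable_const 1) (hvsq x), integral_const, probReal_univ]
        simp
    _ = (1 + Φ 0) / 2 := by rw [hvvar]
  -- finite measures on balls
  have hfinB : ∀ R : ℝ, IsFiniteMeasure (ν.restrict (B R)) := by
    intro R
    refine ⟨?_⟩
    rw [Measure.restrict_apply_univ]
    exact measure_ball_lt_top
  -- Fubini A
  have hA : ∀ R : ℝ, Integrable (fun q : EuclideanSpace ℝ (Fin d) × Ω => v q.1 q.2) ((ν.restrict (B R)).prod μ) := by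
    intro R
    haveI := hfinB R
    rw [integrable_prod_iff hvsm.aestronglyMeasurable]
    constructor
    · exact Filter.Eventually.of_forall fun x => hvint x
    · refine (integrable_const ((1 + Φ 0) / 2)).mono'
        (hvsm.norm.integral_prod_right').aestronglyMeasurable ?_
      filter_upwards with x
      rw [Real.norm_eq_abs, abs_of_nonneg (integral_nonneg fun ω => norm_nonneg _)]
      exact hv1_bound x
  have hEF0 : ∀ R : ℝ, ∫ ω, F R ω ∂μ = 0 := by
    intro R
    have hswap := integral_integral_swap (f := fun x ω => v x ω) (μ := ν.restrict (B R)) (ν := μ) (hA R)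
    have : ∫ ω, F R ω ∂μ = ∫ ω, ∫ x in B R, v x ω ∂ν ∂μ := by
      congr 1; funext ω; rw [hF]
    rw [this, ← hswap]
    simp [hvmean]
  -- Fubini B
  have hBigInt : ∀ R R' : ℝ, Integrable (fun q : (EuclideanSpace ℝ (Fin d) × EuclideanSpace ℝ (Fin d)) × Ω => v q.1.1 q.2 * v q.1.2 q.2)
      (((ν.restrict (B R)).prod (ν.restrict (B R'))).prod μ) := by
    intro R R'
    haveI := hfinB R; haveI := hfinB R'
    have hsm : StronglyMeasurable (fun q : (EuclideanSpace ℝ (Fin d) × EuclideanSpace ℝ (Fin d)) × Ω => v q.1.1 q.2 * v q.1.2 q.2) :=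
      (hvsm.comp_measurable (measurable_fst.fst.prodMk measurable_snd)).mul
        (hvsm.comp_measurable (measurable_fst.snd.prodMk measurable_snd))
    rw [integrable_prod_iff hsm.aestronglyMeasurable]
    constructor
    · exact Filter.Eventually.of_forall fun p => hvmul_int p.1 p.2
    · refine (integrable_const (Φ 0)).mono'
        (hsm.norm.integral_prod_right').aestronglyMeasurable ?_
      filter_upwards with p
      rw [Real.norm_eq_abs, abs_of_nonneg (integral_nonneg fun ω => norm_nonneg _)]
      exact hvv_bound p.1 p.2
  have hΦρ : ∀ R R' : ℝ, Integrable (fun p : EuclideanSpace ℝ (Fin d) × EuclideanSpace ℝ (Fin d) => Φ (p.1 - p.2))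
      ((ν.restrict (B R)).prod (ν.restrict (B R'))) := by
    intro R R'
    have h := (hBigInt R R').integral_prod_left
    simpa only [hcov_v] using h
  have hnum : ∀ R R' : ℝ, ∫ ω, F R ω * F R' ω ∂μ = ∫ x in B R, ∫ y in B R', Φ (x - y) ∂ν ∂ν := by
    intro R R'
    have hswap := integral_integral_swap
      (f := fun (p : EuclideanSpace ℝ (Fin d) × EuclideanSpace ℝ (Fin d)) ω => v p.1 ω * v p.2 ω)
      (μ := (ν.restrict (B R)).prod (ν.restrict (B R'))) (ν := μ) (hBigInt R R')
    have hL : ∫ p : EuclideanSpace ℝ (Fin d) × EuclideanSpace ℝ (Fin d), ∫ ω, v p.1 ω * v p.2 ω ∂μ ∂((ν.restrict (B R)).prod (ν.restrict (B R')))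
        = ∫ p : EuclideanSpace ℝ (Fin d) × EuclideanSpace ℝ (Fin d), Φ (p.1 - p.2) ∂((ν.restrict (B R)).prod (ν.restrict (B R'))) := by
      congr 1; funext p; exact hcov_v p.1 p.2
    have hR : ∀ ω, ∫ p : EuclideanSpace ℝ (Fin d) × EuclideanSpace ℝ (Fin d), v p.1 ω * v p.2 ω ∂((ν.restrict (B R)).prod (ν.restrict (B R')))
        = F R ω * F R' ω := by
      intro ω
      rw [integral_prod_mul (f := fun x => v x ω) (g := fun y => v y ω), hF, hF]
    calc ∫ ω, F R ω * F R' ω ∂μ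
        = ∫ ω, ∫ p : EuclideanSpace ℝ (Fin d) × EuclideanSpace ℝ (Fin d), v p.1 ω * v p.2 ω ∂((ν.restrict (B R)).prod (ν.restrict (B R'))) ∂μ := by
          congr 1; funext ω; rw [hR]
      _ = ∫ p : EuclideanSpace ℝ (Fin d) × EuclideanSpace ℝ (Fin d), ∫ ω, v p.1 ω * v p.2 ω ∂μ ∂((ν.restrict (B R)).prod (ν.restrict (B R'))) := hswap.symm
      _ = ∫ p : EuclideanSpace ℝ (Fin d) × EuclideanSpace ℝ (Fin d), Φ (p.1 - p.2) ∂((ν.restrict (B R)).prod (ν.restrict (B R'))) := hL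
      _ = ∫ x in B R, ∫ y in B R', Φ (x - y) ∂ν ∂ν := integral_prod _ (hΦρ R R')
  -- bound the double integral
  set κ : ℝ := (ν (B 1)).toReal with hκ
  have hκpos : 0 < κ := by
    rw [hκ]
    refine ENNReal.toReal_pos ?_ measure_ball_lt_top.ne
    simp [hB, hν]
    exact Metric.measure_ball_pos ν 0 one_pos |>.ne'
  have hIΦ : 0 ≤ ∫ z, Φ z ∂ν := integral_nonneg hΦpos
  have hnum_le : ∀ R R' : ℝ, 0 < R →
      ∫ x in B R, ∫ y in B R', Φ (x - y) ∂ν ∂ν ≤ (∫ z, Φ z ∂ν) * (R ^ d * κ) := by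
    intro R R' hR
    have hinner : ∀ x : EuclideanSpace ℝ (Fin d), ‖∫ y in B R', Φ (x - y) ∂ν‖ ≤ ∫ z, Φ z ∂ν := by
      intro x
      rw [Real.norm_eq_abs, abs_of_nonneg (integral_nonneg fun y => hΦpos _)]
      calc ∫ y in B R', Φ (x - y) ∂ν ≤ ∫ y, Φ (x - y) ∂ν :=
            setIntegral_le_integral (hΦint.comp_sub_left x)
              (Filter.Eventually.of_forall fun y => hΦpos _)
        _ = ∫ z, Φ z ∂ν := integral_sub_left_eq_self Φ ν x
    have hballR : (ν (B R)).toReal = R ^ d * κ := by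
      rw [hB, hν]
      rw [Measure.addHaar_ball volume (0 : EuclideanSpace ℝ (Fin d)) hR.le]
      rw [ENNReal.toReal_mul, ENNReal.toReal_ofReal (by positivity)]
      congr 2
      · exact finrank_euclideanSpace_fin
    calc ∫ x in B R, ∫ y in B R', Φ (x - y) ∂ν ∂ν
        ≤ ‖∫ x in B R, ∫ y in B R', Φ (x - y) ∂ν ∂ν‖ := Real.le_norm_self _
      _ ≤ (∫ z, Φ z ∂ν) * (ν (B R)).toReal :=
          norm_setIntegral_le_of_norm_le_const measure_ball_lt_top (fun x _ => hinner x)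
      _ = (∫ z, Φ z ∂ν) * (R ^ d * κ) := by rw [hballR]
  have hnum_nonneg : ∀ R R' : ℝ, 0 ≤ ∫ x in B R, ∫ y in B R', Φ (x - y) ∂ν ∂ν := by
    intro R R'
    exact integral_nonneg fun x => integral_nonneg fun y => hΦpos _
  -- the constant
  refine ⟨((∫ z, Φ z ∂ν) * κ) / c₁ ^ 2 + 1, by positivity, ?_⟩
  intro R R' hR hRR'
  have hR' : (1 : ℝ) < R' := lt_of_lt_of_le hR hRR'
  have hRpos : (0 : ℝ) < R := lt_trans one_pos hR
  have hR'pos : (0 : ℝ) < R' := lt_trans one_pos hR'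
  have hσR := hσpos R hR
  have hσR' := hσpos R' hR'
  -- rewrite the LHS
  have hdiv1 : (∫ ω, (F R ω / σ R) * (F R' ω / σ R') ∂μ)
      = (∫ ω, F R ω * F R' ω ∂μ) / (σ R * σ R') := by
    rw [← integral_div]
    congr 1; funext ω; rw [div_mul_div_comm]
  have hdiv2 : (∫ ω, F R ω / σ R ∂μ) = 0 := by
    rw [integral_div, hEF0 R, zero_div]
  rw [hdiv1, hdiv2, zero_mul, sub_zero, hnum R R']
  rw [abs_of_nonneg (div_nonneg (hnum_nonneg R R') (by positivity))]
  -- denominator bound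
  have hσprod : c₁ * R ^ ((d : ℝ) / 2) * (c₁ * R' ^ ((d : ℝ) / 2)) ≤ σ R * σ R' :=
    mul_le_mul (hσlow R hR) (hσlow R' hR') (by positivity) hσR.le
  have hden_pos : (0 : ℝ) < c₁ * R ^ ((d : ℝ) / 2) * (c₁ * R' ^ ((d : ℝ) / 2)) := by positivity
  have step1 : (∫ x in B R, ∫ y in B R', Φ (x - y) ∂ν ∂ν) / (σ R * σ R')
      ≤ ((∫ z, Φ z ∂ν) * (R ^ d * κ)) / (c₁ * R ^ ((d : ℝ) / 2) * (c₁ * R' ^ ((d : ℝ) / 2))) :=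
    div_le_div₀ (by positivity) (hnum_le R R' hRpos) hden_pos hσprod
  refine step1.trans ?_
  have hrw : ((∫ z, Φ z ∂ν) * (R ^ d * κ)) / (c₁ * R ^ ((d : ℝ) / 2) * (c₁ * R' ^ ((d : ℝ) / 2)))
      = ((∫ z, Φ z ∂ν) * κ / c₁ ^ 2) * (R / R') ^ ((d : ℝ) / 2) := by
    have hRd : (R : ℝ) ^ d = R ^ ((d : ℝ) / 2) * R ^ ((d : ℝ) / 2) := by
      rw [← Real.rpow_natCast R d, ← Real.rpow_add hRpos]
      norm_num
    have h1 : (R : ℝ) ^ ((d : ℝ) / 2) ≠ 0 := (Real.rpow_pos_of_pos hRpos _).ne'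
    have h2 : (R' : ℝ) ^ ((d : ℝ) / 2) ≠ 0 := (Real.rpow_pos_of_pos hR'pos _).ne'
    rw [Real.div_rpow hRpos.le hR'pos.le, hRd]
    field_simp
  rw [hrw]
  have hfac : (0 : ℝ) ≤ (R / R') ^ ((d : ℝ) / 2) :=
    (Real.rpow_pos_of_pos (div_pos hRpos hR'pos) _).le
  exact mul_le_mul_of_nonneg_right (by nlinarith [hIΦ, hκpos.le, sq_nonneg c₁]) hfac
end
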